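/- arXiv:1511.00283 — 3 statements merged into one kernel-verified Lean document; each statement's English description precedes it below -/
import Mathlib

section
/- Let U₁, ..., Uₙ be open convex subsets of ℝᵈ whose associated neural code is 2-sparse (no point of ℝᵈ lies in three or more of the sets). If there exist points p ∈ Uᵢ ∩ Uⱼ and q ∈ Uᵢ ∩ Uₖ with j ≠ k, then there exists a point of Uᵢ that lies in no other set Uₘ (m ≠ i). -/
/-- Lemma 2.8 key case: in a 2-sparse open convex arrangement, if `U i` meets
`U j` and `U k` (`j ≠ k`), then some point of `U i` lies in no other set. -/
theorem stmt_0 {d n : ℕ} (U : Fin n → Set (EuclideanSpace ℝ (Fin d)))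
    (hopen : ∀ i, IsOpen (U i)) (hconv : ∀ i, Convex ℝ (U i))
    (hsparse : ∀ (x : EuclideanSpace ℝ (Fin d)) (a b c : Fin n),
      a ≠ b → a ≠ c → b ≠ c → ¬(x ∈ U a ∧ x ∈ U b ∧ x ∈ U c))
    (i j k : Fin n) (hij : i ≠ j) (hik : i ≠ k) (hjk : j ≠ k)
    (p q : EuclideanSpace ℝ (Fin d))
    (hp : p ∈ U i ∩ U j) (hq : q ∈ U i ∩ U k) :
    ∃ x ∈ U i, ∀ m : Fin n, m ≠ i → x ∉ U m := by
  by_contra hcon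
  push_neg at hcon
  set γ : ℝ → EuclideanSpace ℝ (Fin d) := fun t => (1 - t) • p + t • q with hγ
  have hγc : Continuous γ := by fun_prop
  have hseg : ∀ t ∈ Set.Icc (0:ℝ) 1, γ t ∈ U i := fun t ht =>
    hconv i hp.1 hq.1 (by linarith [ht.2]) ht.1 (by ring)
  set u : Set ℝ := γ ⁻¹' (U j) with hu
  set v : Set ℝ := γ ⁻¹' (⋃ m ∈ {m : Fin n | m ≠ i ∧ m ≠ j}, U m) with hv
  have huo : IsOpen u := (hopen j).preimage hγc
  have hvo : IsOpen v := by
    refine IsOpen.preimage hγc ?_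
    exact isOpen_biUnion (fun m _ => hopen m)
  have hcover : Set.Icc (0:ℝ) 1 ⊆ u ∪ v := by
    intro t ht
    obtain ⟨m, hmne, hmem⟩ := hcon (γ t) (hseg t ht)
    by_cases hmj : m = j
    · exact Or.inl (by simpa [hu, hmj] using hmem)
    · exact Or.inr (Set.mem_biUnion ⟨hmne, hmj⟩ hmem)
  have h0 : (Set.Icc (0:ℝ) 1 ∩ u).Nonempty := by
    refine ⟨0, ⟨le_refl 0, zero_le_one⟩, ?_⟩
    simp [hu, hγ, hp.2]
  have h1 : (Set.Icc (0:ℝ) 1 ∩ v).Nonempty := by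
    refine ⟨1, ⟨zero_le_one, le_refl 1⟩, ?_⟩
    refine Set.mem_preimage.2 (Set.mem_biUnion ⟨Ne.symm hik, Ne.symm hjk⟩ ?_)
    simpa [hγ] using hq.2
  obtain ⟨t, ht, htu, htv⟩ :=
    (isPreconnected_Icc : IsPreconnected (Set.Icc (0:ℝ) 1)) u v huo hvo hcover h0 h1
  obtain ⟨m, hmm, hmem⟩ := Set.mem_iUnion₂.1 htv
  exact hsparse (γ t) i j m hij (Ne.symm hmm.1) (Ne.symm hmm.2) ⟨hseg t ht, htu, hmem⟩
end

section
/- There do not exist open convex subsets U₁, U₂, U₃ of ℝᵈ such that U₁ ∩ U₂ ≠ ∅, U₁ ∩ U₃ ≠ ∅, U₁ ∩ U₂ ∩ U₃ = ∅, and U₁ \ (U₂ ∪ U₃) = ∅; that is, such a configuration, in which every point of U₁ lies in exactly one of U₂, U₃, is impossible. -/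
/-- The obstruction of Figure 2: there are no open convex sets `U₁,U₂,U₃` with
`U₁∩U₂ ≠ ∅`, `U₁∩U₃ ≠ ∅`, `U₁∩U₂∩U₃ = ∅`, and `U₁ ⊆ U₂ ∪ U₃`. -/
theorem stmt_7 {d : ℕ} (U₁ U₂ U₃ : Set (EuclideanSpace ℝ (Fin d)))
    (h1 : IsOpen U₁) (h2 : IsOpen U₂) (h3 : IsOpen U₃)
    (c1 : Convex ℝ U₁) (c2 : Convex ℝ U₂) (c3 : Convex ℝ U₃)
    (h12 : (U₁ ∩ U₂).Nonempty) (h13 : (U₁ ∩ U₃).Nonempty)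
    (h123 : U₁ ∩ U₂ ∩ U₃ = ∅) (hcov : U₁ ⊆ U₂ ∪ U₃) :
    False := by
  obtain ⟨x, hx⟩ := c1.isPreconnected U₂ U₃ h2 h3 hcov h12 h13
  have : x ∈ U₁ ∩ U₂ ∩ U₃ := ⟨⟨hx.1, hx.2.1⟩, hx.2.2⟩
  simp [h123] at this
end

section
/- For each i = 1,...,n, let ℓᵢ ⊆ ℝ² be the closed segment with endpoints (i,0) and (0, n+1−i). Then for all i ≠ j, ℓᵢ ∩ ℓⱼ ≠ ∅, and no point of ℝ² lies on three distinct segments ℓᵢ, ℓⱼ, ℓₖ. -/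
/-!
The segment `ℓᵢ` lies on the line `x / a + y / (m - a) = 1` with `a = i` and `m = n + 1`.
Two such segments with parameters `a ≠ b` in `[0, m]` meet at `(a b / m, (m - a)(m - b) / m)`,
and subtracting their line equations shows that any common point `p` satisfies
`a + b = m + p.1 - p.2`. A common point of three segments would then force `a + b = a + c`.
-/

def axisSegment (m a : ℝ) : Set (ℝ × ℝ) :=
  segment ℝ (a, 0) (0, m - a)

lemma line_eq_of_mem_axisSegment {m a : ℝ} {p : ℝ × ℝ} (hp : p ∈ axisSegment m a) :
    p.1 * (m - a) + p.2 * a = a * (m - a) := by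
  obtain ⟨u, v, -, -, huv, rfl⟩ := hp
  simp only [Prod.fst_add, Prod.snd_add, Prod.smul_fst, Prod.smul_snd, smul_eq_mul]
  linear_combination (a * (m - a)) * huv

lemma mem_axisSegment {m a b : ℝ} (hm : 0 < m) (hb₀ : 0 ≤ b) (hbm : b ≤ m) :
    (a * b / m, (m - a) * (m - b) / m) ∈ axisSegment m a := by
  refine ⟨b / m, (m - b) / m, by positivity, div_nonneg (by linarith) hm.le, ?_, ?_⟩
  · field_simp
    ring
  · ext <;> simp only [Prod.fst_add, Prod.snd_add, Prod.smul_fst, Prod.smul_snd, smul_eq_mul]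
      <;> field_simp <;> ring

lemma axisSegment_inter_nonempty {m a b : ℝ} (hm : 0 < m) (ha₀ : 0 ≤ a) (ham : a ≤ m)
    (hb₀ : 0 ≤ b) (hbm : b ≤ m) : (axisSegment m a ∩ axisSegment m b).Nonempty := by
  refine ⟨_, mem_axisSegment hm hb₀ hbm, ?_⟩
  rw [mul_comm a, mul_comm (m - a)]
  exact mem_axisSegment hm ha₀ ham

lemma add_eq_of_mem_axisSegment_inter {m a b : ℝ} {p : ℝ × ℝ} (hab : a ≠ b)
    (hp : p ∈ axisSegment m a ∩ axisSegment m b) : a + b = m + p.1 - p.2 := by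
  have ha := line_eq_of_mem_axisSegment hp.1
  have hb := line_eq_of_mem_axisSegment hp.2
  have h : (a - b) * (a + b - (m + p.1 - p.2)) = 0 := by linear_combination ha - hb
  exact sub_eq_zero.1 ((mul_eq_zero.1 h).resolve_left (sub_ne_zero.2 hab))

lemma axisSegment_inter_inter_eq_empty {m a b c : ℝ} (hab : a ≠ b) (hac : a ≠ c) (hbc : b ≠ c) :
    axisSegment m a ∩ axisSegment m b ∩ axisSegment m c = ∅ := by
  refine Set.eq_empty_of_forall_notMem fun p ⟨⟨hpa, hpb⟩, hpc⟩ => hbc ?_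
  have hsum_b := add_eq_of_mem_axisSegment_inter hab ⟨hpa, hpb⟩
  have hsum_c := add_eq_of_mem_axisSegment_inter hac ⟨hpa, hpc⟩
  linarith

/-- The segments `ℓᵢ` from `(i,0)` to `(0, n+1-i)` (for `i = 1,…,n`) pairwise
intersect, but no three of them are concurrent. -/
theorem stmt_9 (n : ℕ) (ℓ : Fin n → Set (ℝ × ℝ))
    (hℓ : ∀ i : Fin n, ℓ i = segment ℝ (((i : ℕ) + 1 : ℝ), 0)
      (0, ((n : ℝ) + 1 - ((i : ℕ) + 1)))) :
    (∀ i j : Fin n, i ≠ j → (ℓ i ∩ ℓ j).Nonempty) ∧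
    (∀ i j k : Fin n, i ≠ j → i ≠ k → j ≠ k → ℓ i ∩ ℓ j ∩ ℓ k = ∅) := by
  have hℓ' (i : Fin n) : ℓ i = axisSegment (n + 1) ((i : ℕ) + 1) := hℓ i
  have hbounds (i : Fin n) : (0 : ℝ) ≤ (i : ℕ) + 1 ∧ ((i : ℕ) + 1 : ℝ) ≤ n + 1 := by
    refine ⟨by positivity, ?_⟩
    gcongr
    exact_mod_cast i.is_lt.le
  have hinj {i j : Fin n} (hij : i ≠ j) : ((i : ℕ) + 1 : ℝ) ≠ (j : ℕ) + 1 := by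
    simpa [Fin.val_inj] using hij
  refine ⟨fun i j _ => ?_, fun i j k hij hik hjk => ?_⟩
  · rw [hℓ', hℓ']
    exact axisSegment_inter_nonempty (by positivity) (hbounds i).1 (hbounds i).2
      (hbounds j).1 (hbounds j).2
  · rw [hℓ', hℓ', hℓ']
    exact axisSegment_inter_inter_eq_empty (hinj hij) (hinj hik) (hinj hjk)
end
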